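/- arXiv:2511.09176 — 2 statements merged into one kernel-verified Lean document; each statement's English description precedes it below -/
import Mathlib

section
/- Let K be an algebraically closed field, A a K-algebra, and M a finite-dimensional K-vector space which is an A-module. Then M is a simple A-module if and only if the structure homomorphism A → End_K(M) is surjective. -/
/-!
Simplicity over `End_K(M)` pulls back along a surjection `A → End_K(M)`. Conversely, if `M` is
simple over `A`, Schur's lemma over the algebraically closed field `K` makes every `A`-linear
endomorphism a scalar, so every `K`-linear map commutes with `End_A(M)`; since `M` is finite over
`End_A(M)`, the Jacobson density theorem realises such a map by an element of `A`.
-/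

open Module

section
variable {K A M : Type*} [Field K] [Ring A] [Algebra K A] [AddCommGroup M] [Module K M]
  [Module A M] [IsScalarTower K A M]

theorem Algebra.lsmul_surjective_of_algebraMap_end_surjective [IsSemisimpleModule A M]
    [Module.Finite K M] (h : Function.Surjective (algebraMap K (End A M))) :
    Function.Surjective (Algebra.lsmul K K M : A →ₐ[K] End K M) := by
  intro f
  let f' : End (End A M) M :=
    { toFun := f
      map_add' := f.map_add
      map_smul' := fun g m => by
        obtain ⟨c, rfl⟩ := h g
        simp }
  have : Module.Finite (End A M) M := .of_restrictScalars_finite K _ M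
  obtain ⟨a, ha⟩ := Module.Finite.toModuleEnd_moduleEnd_surjective f'
  exact ⟨a, LinearMap.ext fun m => congr($ha m)⟩

theorem isSimpleModule_of_lsmul_surjective [Nontrivial M]
    (h : Function.Surjective (Algebra.lsmul K K M : A →ₐ[K] End K M)) :
    IsSimpleModule A M := by
  have : RingHomSurjective (Algebra.lsmul K K M : A →ₐ[K] End K M).toRingHom := ⟨h⟩
  let l : M →ₛₗ[(Algebra.lsmul K K M : A →ₐ[K] End K M).toRingHom] M :=
    { toFun := id, map_add' := fun _ _ => rfl, map_smul' := fun _ _ => rfl }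
  exact (l.isSimpleModule_iff_of_bijective Function.bijective_id).mpr inferInstance

end

/-- Wedderburn/Jacobson density over an algebraically closed field: a nonzero
finite-dimensional module `M` over a `K`-algebra `A` is simple if and only if the structure
homomorphism `A → End_K(M)` is surjective. -/
theorem stmt8 (K A M : Type*) [Field K] [IsAlgClosed K] [Ring A] [Algebra K A]
    [AddCommGroup M] [Module K M] [Module A M] [IsScalarTower K A M]
    [FiniteDimensional K M] [Nontrivial M] :
    IsSimpleModule A M ↔ Function.Surjective (Algebra.lsmul K K M : A →ₐ[K] Module.End K M) :=
  ⟨fun _ => Algebra.lsmul_surjective_of_algebraMap_end_surjective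
      (IsSimpleModule.algebraMap_end_bijective_of_isAlgClosed K).2,
    isSimpleModule_of_lsmul_surjective⟩
end

section
/- Let K be an algebraically closed field. Then every maximal ideal of K[x₁,…,xₙ] is of the form (x₁−a₁,…,xₙ−aₙ) for some point (a₁,…,aₙ) ∈ Kⁿ, giving a bijection between Kⁿ and the set of maximal ideals of K[x₁,…,xₙ]. -/
/-! Zariski's lemma (the quotient by a maximal ideal is algebraic over `K`, hence `K` itself)
makes every maximal ideal the kernel of evaluation at a point `a`. That kernel is generated by the
`Xᵢ - aᵢ`, because every polynomial is congruent to its value at `a` modulo them. -/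

open MvPolynomial

section PointIdeal

variable {σ R : Type*}

lemma sub_C_eval_mem_span_X_sub_C [CommRing R] (a : σ → R) (p : MvPolynomial σ R) :
    p - C (eval a p) ∈ Ideal.span (Set.range fun i => (X i : MvPolynomial σ R) - C (a i)) := by
  induction p using MvPolynomial.induction_on with
  | C c => simp
  | add p q hp hq =>
    have hsplit : p + q - C (eval a (p + q)) = (p - C (eval a p)) + (q - C (eval a q)) := by
      rw [map_add, map_add]; ring
    exact hsplit ▸ Ideal.add_mem _ hp hq
  | mul_X p i hp =>
    have hsplit : p * X i - C (eval a (p * X i)) =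
        p * ((X i : MvPolynomial σ R) - C (a i)) + (p - C (eval a p)) * C (a i) := by
      rw [map_mul, eval_X, map_mul]; ring
    exact hsplit ▸ Ideal.add_mem _
      (Ideal.mul_mem_left _ _ (Ideal.subset_span ⟨i, rfl⟩)) (Ideal.mul_mem_right _ _ hp)

lemma span_X_sub_C_eq_ker_eval [CommRing R] (a : σ → R) :
    Ideal.span (Set.range fun i => (X i : MvPolynomial σ R) - C (a i)) =
      RingHom.ker (eval a) := by
  apply le_antisymm
  · rw [Ideal.span_le]
    rintro _ ⟨i, rfl⟩
    simp
  · intro p hp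
    simpa [RingHom.mem_ker.mp hp] using sub_C_eval_mem_span_X_sub_C a p

lemma ker_eval_injective [CommRing R] :
    Function.Injective fun a : σ → R => RingHom.ker (eval a : MvPolynomial σ R →+* R) := by
  intro a b (hab : RingHom.ker (eval a) = RingHom.ker (eval b))
  funext i
  have hmem : eval a ((X i : MvPolynomial σ R) - C (b i)) = 0 :=
    RingHom.mem_ker.mp (hab ▸ RingHom.mem_ker.mpr (by simp))
  simpa [sub_eq_zero] using hmem

lemma vanishingIdeal_singleton_eq_ker_eval [Field R] (a : σ → R) :
    (vanishingIdeal R {a} : Ideal (MvPolynomial σ R)) = RingHom.ker (eval a) := by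
  ext p
  rw [mem_vanishingIdeal_singleton_iff, RingHom.mem_ker]
  rfl

end PointIdeal

/-- Weak Nullstellensatz: over an algebraically closed field `K`, every maximal ideal of
`K[x₁,…,xₙ]` equals `(x₁-a₁,…,xₙ-aₙ)` for a unique point `a ∈ Kⁿ`, and every such ideal is
maximal; thus `a ↦ (x₁-a₁,…,xₙ-aₙ)` is a bijection from `Kⁿ` onto the maximal ideals. -/
theorem stmt13 (K : Type*) [Field K] [IsAlgClosed K] (n : ℕ) :
    (∀ m : Ideal (MvPolynomial (Fin n) K), m.IsMaximal →
      ∃! a : Fin n → K,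
        m = Ideal.span (Set.range fun i : Fin n =>
          (X i : MvPolynomial (Fin n) K) - C (a i))) ∧
    (∀ a : Fin n → K,
      (Ideal.span (Set.range fun i : Fin n =>
        (X i : MvPolynomial (Fin n) K) - C (a i))).IsMaximal) := by
  simp only [span_X_sub_C_eq_ker_eval]
  refine ⟨fun m hm => ?_, fun a => RingHom.ker_isMaximal_of_surjective _ fun c => ⟨C c, eval_C c⟩⟩
  obtain ⟨a, rfl⟩ := isMaximal_iff_eq_vanishingIdeal_singleton.mp hm
  rw [vanishingIdeal_singleton_eq_ker_eval]
  exact ⟨a, rfl, fun b hb => ker_eval_injective hb.symm⟩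
end
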